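/- arXiv:2403.16156 — 2 statements merged into one kernel-verified Lean document; each statement's English description precedes it below -/
import Mathlib

section
/- Consider the truncated normal-form vector field on ℝ⁴ (with α = 13/32, ε > 0): ż₁ = z₂ − αε²(z₂r² + 2z₃Θ), ż₂ = −z₁ + αε²(z₁r² − 2z₄Θ), ż₃ = z₄ + 2εz₁ − αε²z₄r², ż₄ = −z₃ + 2εz₂ + αε²z₃r², with r² = z₃²+z₄², Θ = z₂z₃−z₁z₄. On the open set Ω = {z : z₁z₃+z₂z₄ > 0 and z₂z₃−z₁z₄ < 0}, the function V = z₁z₃+z₂z₄ satisfies V̇ = 2ε(z₁²+z₂²) − 2αε²(z₃²+z₄²)Θ > 0 for all z ∈ Ω. -/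
/-- The truncated normal-form vector field on ℝ⁴ with `α = 13/32` and parameter
`ε`, where `r² = z₃² + z₄²` and `Θ = z₂z₃ − z₁z₄`. -/
noncomputable def f (ε : ℝ) (z : Fin 4 → ℝ) : Fin 4 → ℝ :=
  let α : ℝ := 13 / 32
  let r2 : ℝ := z 2 ^ 2 + z 3 ^ 2
  let Θ : ℝ := z 1 * z 2 - z 0 * z 3
  ![z 1 - α * ε ^ 2 * (z 1 * r2 + 2 * z 2 * Θ),
    -z 0 + α * ε ^ 2 * (z 0 * r2 - 2 * z 3 * Θ),
    z 3 + 2 * ε * z 0 - α * ε ^ 2 * z 3 * r2,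
    -z 2 + 2 * ε * z 1 + α * ε ^ 2 * z 2 * r2]

/-- The Chetayev function `V(z) = z₁z₃ + z₂z₄`. -/
def V : (Fin 4 → ℝ) → ℝ := fun z => z 0 * z 2 + z 1 * z 3

/-- The Chetayev cone `Ω = {z : z₁z₃ + z₂z₄ > 0 and z₂z₃ − z₁z₄ < 0}`. -/
def Om : Set (Fin 4 → ℝ) :=
  {z | z 0 * z 2 + z 1 * z 3 > 0 ∧ z 1 * z 2 - z 0 * z 3 < 0}

/-- On `Ω`, the derivative of `V` along the truncated normal-form vector field
equals `2ε(z₁²+z₂²) − 2αε²(z₃²+z₄²)Θ` and is strictly positive. -/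
theorem stmt15 (ε : ℝ) (hε : 0 < ε) :
    ∀ z ∈ Om,
      fderiv ℝ V z (f ε z)
          = 2 * ε * (z 0 ^ 2 + z 1 ^ 2)
            - 2 * (13 / 32) * ε ^ 2 * (z 2 ^ 2 + z 3 ^ 2) * (z 1 * z 2 - z 0 * z 3)
        ∧ 0 < fderiv ℝ V z (f ε z) := by

  intro z hz
  obtain ⟨h1, h2⟩ := hz
  have p0 : HasFDerivAt (fun z : Fin 4 → ℝ => z 0)
      (ContinuousLinearMap.proj 0 : (Fin 4 → ℝ) →L[ℝ] ℝ) z :=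
    hasFDerivAt_apply 0 z
  have p1 : HasFDerivAt (fun z : Fin 4 → ℝ => z 1)
      (ContinuousLinearMap.proj 1 : (Fin 4 → ℝ) →L[ℝ] ℝ) z :=
    hasFDerivAt_apply 1 z
  have p2 : HasFDerivAt (fun z : Fin 4 → ℝ => z 2)
      (ContinuousLinearMap.proj 2 : (Fin 4 → ℝ) →L[ℝ] ℝ) z :=
    hasFDerivAt_apply 2 z
  have p3 : HasFDerivAt (fun z : Fin 4 → ℝ => z 3)
      (ContinuousLinearMap.proj 3 : (Fin 4 → ℝ) →L[ℝ] ℝ) z :=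
    hasFDerivAt_apply 3 z
  have hV : HasFDerivAt V ((z 0 • (ContinuousLinearMap.proj 2 : (Fin 4 → ℝ) →L[ℝ] ℝ)
      + z 2 • ContinuousLinearMap.proj 0)
      + (z 1 • (ContinuousLinearMap.proj 3 : (Fin 4 → ℝ) →L[ℝ] ℝ)
      + z 3 • ContinuousLinearMap.proj 1)) z := (p0.mul p2).add (p1.mul p3)
  have hval : fderiv ℝ V z (f ε z)
      = 2 * ε * (z 0 ^ 2 + z 1 ^ 2)
        - 2 * (13 / 32) * ε ^ 2 * (z 2 ^ 2 + z 3 ^ 2) * (z 1 * z 2 - z 0 * z 3) := by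
    rw [hV.fderiv]
    simp only [f, ContinuousLinearMap.add_apply, ContinuousLinearMap.smul_apply,
      ContinuousLinearMap.proj_apply, smul_eq_mul]
    show z 0 * (![_, _, _, _] : Fin 4 → ℝ) 2 + _ * _ + (_ * (![_,_,_,_] : Fin 4 → ℝ) 3 + _ * _) = _
    simp only [Matrix.cons_val_zero, Matrix.cons_val_one, Matrix.head_cons,
      Matrix.cons_val_two, Matrix.tail_cons, Matrix.cons_val_three]
    ring
  refine ⟨hval, ?_⟩
  rw [hval]
  have hA : 0 < z 0 ^ 2 + z 1 ^ 2 := by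
    nlinarith [sq_nonneg (z 0 * z 3 - z 1 * z 2), sq_nonneg (z 2), sq_nonneg (z 3), mul_pos h1 h1]
  nlinarith [mul_pos hε hA, mul_nonneg (mul_nonneg (sq_nonneg ε)
    (add_nonneg (sq_nonneg (z 2)) (sq_nonneg (z 3)))) (neg_nonneg.2 h2.le)]
end

section
/- Chetayev's instability theorem: Let U ⊆ ℝⁿ be open containing 0, f : U → ℝⁿ a C¹ vector field with f(0) = 0, Ω ⊆ U open, and V : U → ℝ a C¹ function such that (i) 0 ∈ ∂Ω, (ii) V > 0 on Ω, (iii) V = 0 on ∂Ω ∩ U, and (iv) ∇V · f > 0 on Ω. Then the equilibrium 0 of ż = f(z) is unstable: there exists ε₀ > 0 such that for every δ > 0 there is an initial condition z₀ with ‖z₀‖ < δ whose forward solution leaves the ball of radius ε₀ in finite time (or ceases to exist). -/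
/-!
Fix `ε₀ = r` with `closedBall 0 r ⊆ U` and start at a point `z₀ ∈ Om` close to `0`. Along a
solution, `V ∘ x` has derivative `∇V · f ≥ 0` while the solution is in `Om`; since `V = 0` on
`∂Om ∩ U` and `V z₀ > 0`, the solution can never reach `∂Om`, so it stays in `Om` and
`V (x t) ≥ V z₀`. If it also stayed in the ball, it would stay in the compact set
`closedBall 0 r ∩ closure Om ∩ {V ≥ V z₀}`, which lies in `Om`. There `∇V · f` has a positive
minimum `a` and `V` is bounded, contradicting the growth `V (x t) ≥ V z₀ + a t`.
-/

open Set Metric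

namespace Chetayev

theorem monotoneOn_of_hasDerivAt_nonneg {D : Set ℝ} (hD : Convex ℝ D) {g g' : ℝ → ℝ}
    (hg : ∀ t ∈ D, HasDerivAt g (g' t) t) (hg' : ∀ t ∈ interior D, 0 ≤ g' t) :
    MonotoneOn g D :=
  monotoneOn_of_hasDerivWithinAt_nonneg hD
    (fun t ht => (hg t ht).continuousAt.continuousWithinAt)
    (fun t ht => (hg t (interior_subset ht)).hasDerivWithinAt) hg'

variable {X : Type*} [TopologicalSpace X]

theorem exists_first_exit {s : Set X} (hs : IsOpen s) {x : ℝ → X}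
    (hx : ContinuousOn x (Ici 0)) (h0 : x 0 ∈ s) (hexit : ¬ MapsTo x (Ici 0) s) :
    ∃ T > 0, x T ∈ frontier s ∧ MapsTo x (Ico 0 T) s := by
  set S := Ici 0 ∩ x ⁻¹' sᶜ
  have hSne : S.Nonempty :=
    let ⟨t, ht, hts⟩ := not_forall₂.1 hexit
    ⟨t, ht, hts⟩
  have hSbdd : BddBelow S := ⟨0, fun _ ht => ht.1⟩
  have hTS : sInf S ∈ S :=
    (hx.preimage_isClosed_of_isClosed isClosed_Ici hs.isClosed_compl).csInf_mem hSne hSbdd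
  have hT : 0 < sInf S := hTS.1.lt_of_ne fun h => hTS.2 (h ▸ h0)
  have hbefore : MapsTo x (Ico 0 (sInf S)) s := fun t ht =>
    by_contra fun hts => (csInf_le hSbdd ⟨ht.1, hts⟩).not_gt ht.2
  refine ⟨sInf S, hT, ⟨?_, by rw [hs.interior_eq]; exact hTS.2⟩, hbefore⟩
  exact ((hx _ hTS.1).mono Ico_subset_Ici_self).mem_closure
    (by rw [closure_Ico hT.ne]; exact ⟨hTS.1, le_rfl⟩) hbefore

theorem mapsTo_Ici_of_frontier_nonpos {Om : Set X} (hOm : IsOpen Om) {V W : X → ℝ}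
    {x : ℝ → X} (hx : ContinuousOn x (Ici 0))
    (hVx : ∀ t ∈ Ici 0, HasDerivAt (V ∘ x) (W (x t)) t) (hW : ∀ z ∈ Om, 0 ≤ W z)
    (hx0 : x 0 ∈ Om) (hV0 : 0 < V (x 0))
    (hfr : ∀ t ∈ Ici 0, x t ∈ frontier Om → V (x t) ≤ 0) :
    MapsTo x (Ici 0) Om := by
  by_contra hexit
  obtain ⟨T, hT, hTfr, hbefore⟩ := exists_first_exit hOm hx hx0 hexit
  have hmono : MonotoneOn (V ∘ x) (Icc 0 T) :=
    monotoneOn_of_hasDerivAt_nonneg (convex_Icc 0 T) (fun t ht => hVx t ht.1) fun t ht => by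
      rw [interior_Icc] at ht
      exact hW _ (hbefore ⟨ht.1.le, ht.2⟩)
  have hVT : V (x 0) ≤ V (x T) := hmono ⟨le_rfl, hT.le⟩ ⟨hT.le, le_rfl⟩ hT.le
  linarith [hfr T hT.le hTfr]

theorem not_mapsTo_Ici_of_isCompact {K : Set X} (hK : IsCompact K) {V W : X → ℝ}
    (hV : ContinuousOn V K) (hW : ContinuousOn W K) (hWpos : ∀ z ∈ K, 0 < W z) {x : ℝ → X}
    (hVx : ∀ t ∈ Ici 0, HasDerivAt (V ∘ x) (W (x t)) t) :
    ¬ MapsTo x (Ici 0) K := by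
  intro hxK
  have hne : K.Nonempty := ⟨x 0, hxK self_mem_Ici⟩
  obtain ⟨zm, hzm, hmin⟩ := hK.exists_isMinOn hne hW
  obtain ⟨zM, -, hmax⟩ := hK.exists_isMaxOn hne hV
  set a := W zm
  have ha : 0 < a := hWpos zm hzm
  have hgrowth : MonotoneOn (fun t => V (x t) - a * t) (Ici 0) :=
    monotoneOn_of_hasDerivAt_nonneg (convex_Ici 0)
      (fun t ht => by
        have hderiv := (hVx t ht).sub ((hasDerivAt_id' t).const_mul a)
        rw [mul_one] at hderiv
        exact hderiv)
      fun t ht => sub_nonneg.2 (hmin (hxK (interior_subset ht)))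
  set T := (V zM - V (x 0)) / a + 1
  have hT : 0 ≤ T := by
    have : V (x 0) ≤ V zM := hmax (hxK self_mem_Ici)
    have : 0 ≤ (V zM - V (x 0)) / a := div_nonneg (by linarith) ha.le
    linarith
  have hgrowthT : V (x 0) ≤ V (x T) - a * T := by
    simpa using hgrowth self_mem_Ici hT hT
  have haT : a * T = V zM - V (x 0) + a := by
    simp only [T, mul_add, mul_div_cancel₀ _ ha.ne', mul_one]
  linarith [show V (x T) ≤ V zM from hmax (hxK hT)]

theorem inter_closure_inter_preimage_Ici_subset {Om U C : Set X} (hOm : IsOpen Om)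
    (hCU : C ⊆ U) {V : X → ℝ} (hV : ∀ z ∈ frontier Om, z ∈ U → V z = 0) {c : ℝ} (hc : 0 < c) :
    C ∩ closure Om ∩ V ⁻¹' Ici c ⊆ Om := by
  rintro z ⟨⟨hzC, hzcl⟩, hzV⟩
  by_contra hzOm
  have hzfr : z ∈ frontier Om := ⟨hzcl, by rwa [hOm.interior_eq]⟩
  linarith [hV z hzfr (hCU hzC), show c ≤ V z from hzV]

end Chetayev

open Chetayev

theorem stmt17_general {n : ℕ} (U : Set (EuclideanSpace ℝ (Fin n))) (hU : IsOpen U)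
    (h0U : (0 : EuclideanSpace ℝ (Fin n)) ∈ U)
    (f : EuclideanSpace ℝ (Fin n) → EuclideanSpace ℝ (Fin n))
    (hf : ContDiffOn ℝ 1 f U)
    (Om : Set (EuclideanSpace ℝ (Fin n))) (hOm : IsOpen Om)
    (V : EuclideanSpace ℝ (Fin n) → ℝ) (hV : ContDiffOn ℝ 1 V U)
    (h1 : (0 : EuclideanSpace ℝ (Fin n)) ∈ frontier Om)
    (h2 : ∀ z ∈ Om, 0 < V z)
    (h3 : ∀ z ∈ frontier Om, z ∈ U → V z = 0)
    (h4 : ∀ z ∈ Om, 0 < fderiv ℝ V z (f z)) :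
    ∃ ε₀ > 0, ∀ δ > 0, ∃ z₀ : EuclideanSpace ℝ (Fin n), ‖z₀‖ < δ ∧
      ∀ x : ℝ → EuclideanSpace ℝ (Fin n), x 0 = z₀ →
        (∀ t ∈ Set.Ici (0 : ℝ), x t ∈ U ∧ HasDerivAt x (f (x t)) t) →
        ∃ t ≥ (0 : ℝ), ε₀ ≤ ‖x t‖ := by
  obtain ⟨r, hr0, hrU⟩ : ∃ r > 0, closedBall (0 : EuclideanSpace ℝ (Fin n)) r ⊆ U :=
    nhds_basis_closedBall.mem_iff.1 (hU.mem_nhds h0U)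
  refine ⟨r, hr0, fun δ hδ => ?_⟩
  obtain ⟨z₀, hz₀Om, hz₀⟩ := mem_closure_iff.1 h1.1 _ (lt_min hδ hr0)
  rw [dist_zero_left] at hz₀
  refine ⟨z₀, hz₀.trans_le (min_le_left _ _), fun x hx0 hsol => ?_⟩
  by_contra! hball
  set W := fun z => fderiv ℝ V z (f z)
  have hW : ContinuousOn W U :=
    (hV.continuousOn_fderiv_of_isOpen hU le_rfl).clm_apply hf.continuousOn
  have hVx : ∀ t ∈ Ici 0, HasDerivAt (V ∘ x) (W (x t)) t := fun t ht =>
    ((hV.differentiableOn one_ne_zero).differentiableAt (hU.mem_nhds (hsol t ht).1)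
      ).hasFDerivAt.comp_hasDerivAt t (hsol t ht).2
  have hxOm : MapsTo x (Ici 0) Om :=
    mapsTo_Ici_of_frontier_nonpos hOm (fun t ht => (hsol t ht).2.continuousAt.continuousWithinAt)
      hVx (fun z hz => (h4 z hz).le) (hx0 ▸ hz₀Om) (hx0 ▸ h2 z₀ hz₀Om)
      fun t ht hfr => (h3 _ hfr (hsol t ht).1).le
  have hVmono : MonotoneOn (V ∘ x) (Ici 0) :=
    monotoneOn_of_hasDerivAt_nonneg (convex_Ici 0) hVx fun t ht =>
      (h4 _ (hxOm (interior_subset ht))).le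
  set K := closedBall 0 r ∩ closure Om ∩ V ⁻¹' Ici (V z₀)
  have hKOm : K ⊆ Om := inter_closure_inter_preimage_Ici_subset hOm hrU h3 (h2 z₀ hz₀Om)
  have hKU : K ⊆ U := fun z hz => hrU hz.1.1
  have hK : IsCompact K := (hV.continuousOn.mono fun z hz => hrU hz.1).upperSemicontinuousOn
    |>.isCompact_inter_preimage_Ici ((isCompact_closedBall 0 r).inter_right isClosed_closure) _
  refine not_mapsTo_Ici_of_isCompact hK (hV.continuousOn.mono hKU) (hW.mono hKU)
    (fun z hz => h4 z (hKOm hz)) hVx fun t ht => ⟨⟨?_, subset_closure (hxOm ht)⟩, ?_⟩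
  · exact mem_closedBall_zero_iff.2 (hball t ht).le
  · simpa [hx0] using hVmono self_mem_Ici ht ht

/-- **Chetayev's instability theorem.** Let `U ⊆ ℝⁿ` be open with `0 ∈ U`,
`f : U → ℝⁿ` a `C¹` vector field with `f 0 = 0`, `Om ⊆ U` open, and
`V : U → ℝ` a `C¹` function with (i) `0 ∈ ∂Om`, (ii) `V > 0` on `Om`,
(iii) `V = 0` on `∂Om ∩ U`, (iv) `∇V · f > 0` on `Om`. Then the equilibrium
`0` is unstable: there is `ε₀ > 0` such that for every `δ > 0` there is an
initial condition `z₀` with `‖z₀‖ < δ` such that every forward solution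
starting at `z₀` that stays in `U` for all `t ≥ 0` leaves the ball of radius
`ε₀` (so it leaves in finite time or ceases to exist in `U`). -/
theorem stmt17 {n : ℕ} (U : Set (EuclideanSpace ℝ (Fin n))) (hU : IsOpen U)
    (h0U : (0 : EuclideanSpace ℝ (Fin n)) ∈ U)
    (f : EuclideanSpace ℝ (Fin n) → EuclideanSpace ℝ (Fin n))
    (hf : ContDiffOn ℝ 1 f U) (hf0 : f 0 = 0)
    (Om : Set (EuclideanSpace ℝ (Fin n))) (hOm : IsOpen Om) (hOmU : Om ⊆ U)
    (V : EuclideanSpace ℝ (Fin n) → ℝ) (hV : ContDiffOn ℝ 1 V U)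
    (h1 : (0 : EuclideanSpace ℝ (Fin n)) ∈ frontier Om)
    (h2 : ∀ z ∈ Om, 0 < V z)
    (h3 : ∀ z ∈ frontier Om, z ∈ U → V z = 0)
    (h4 : ∀ z ∈ Om, 0 < fderiv ℝ V z (f z)) :
    ∃ ε₀ > 0, ∀ δ > 0, ∃ z₀ : EuclideanSpace ℝ (Fin n), ‖z₀‖ < δ ∧
      ∀ x : ℝ → EuclideanSpace ℝ (Fin n), x 0 = z₀ →
        (∀ t ∈ Set.Ici (0 : ℝ), x t ∈ U ∧ HasDerivAt x (f (x t)) t) →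
        ∃ t ≥ (0 : ℝ), ε₀ ≤ ‖x t‖ :=
  stmt17_general U hU h0U f hf Om hOm V hV h1 h2 h3 h4
end
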